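/- Let G be an FC group and let N be a normal subgroup of finite index in G. Then G'/N' is finite, where G' is the commutator subgroup of G and N' is the commutator subgroup of N. -/

import Mathlib

/-!
Put `N' = ⁅N, N⁆`. In `G ⧸ N'` the image of `N` is abelian of finite index, and conjugacy classes
stay finite. In an FC group with an abelian subgroup `A` of finite index, `A` together with the
centralizers of finitely many coset representatives of `A` cuts out a finite-index subgroup of the
centre; by Schur's theorem the derived subgroup of `G ⧸ N'` is then finite. It is the image of `G'`,
with kernel `G' ∩ N'`.
-/

open Subgroup
open scoped commutatorElement

def IsFCGroup (G : Type*) [Group G] : Prop :=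
  ∀ x : G, (Set.range fun h : G => h * x * h⁻¹).Finite

namespace IsFCGroup

variable {G H : Type*} [Group G] [Group H]

theorem of_surjective (hG : IsFCGroup G) {f : G →* H} (hf : Function.Surjective f) :
    IsFCGroup H := by
  intro y
  obtain ⟨x, rfl⟩ := hf y
  refine ((hG x).image f).subset ?_
  rintro _ ⟨h, rfl⟩
  obtain ⟨g, rfl⟩ := hf h
  exact ⟨g * x * g⁻¹, ⟨g, rfl⟩, by simp only [map_mul, map_inv]⟩

theorem finiteIndex_centralizer_singleton (hG : IsFCGroup G) (x : G) :
    (centralizer {x}).FiniteIndex := by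
  have : Finite (MulAction.orbit (ConjAct G) x) := by
    refine ((hG x).subset ?_).to_subtype
    rintro _ ⟨g, rfl⟩
    exact ⟨ConjAct.ofConjAct g, (ConjAct.smul_def g x).symm⟩
  have e : MulAction.orbit (ConjAct G) x ≃ G ⧸ centralizer {x} :=
    (MulAction.orbitEquivQuotientStabilizer (ConjAct G) x).trans
      (quotientEquivOfEq (ConjAct.stabilizer_eq_centralizer x))
  have : Finite (G ⧸ centralizer {x}) := .of_equiv _ e
  exact finiteIndex_of_finite_quotient

theorem finiteIndex_center (hG : IsFCGroup G) (A : Subgroup G) [A.FiniteIndex]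
    [IsMulCommutative A] : (center G).FiniteIndex := by
  have hclosure : closure ((A : Set G) ∪ Set.range (Quotient.out : G ⧸ A → G)) = ⊤ := by
    refine eq_top_iff.mpr fun g _ => ?_
    obtain ⟨a, ha⟩ := QuotientGroup.mk_out_eq_mul A g
    have hg : g = Quotient.out (g : G ⧸ A) * (a : G)⁻¹ := by rw [ha]; group
    rw [hg]
    exact mul_mem (subset_closure (Or.inr ⟨_, rfl⟩)) (inv_mem (subset_closure (Or.inl a.2)))
  have : (⨅ q : G ⧸ A, centralizer {q.out}).FiniteIndex :=
    finiteIndex_iInf fun q => hG.finiteIndex_centralizer_singleton q.out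
  refine finiteIndex_of_le (H := A ⊓ ⨅ q : G ⧸ A, centralizer {q.out}) ?_
  rw [center_eq_infi' hclosure]
  refine le_iInf fun ⟨s, hs⟩ => ?_
  rcases hs with hs | ⟨q, rfl⟩
  · exact inf_le_left.trans fun a ha =>
      mem_centralizer_singleton_iff.mpr (setLike_mul_comm ha hs)
  · exact inf_le_right.trans (iInf_le _ q)

end IsFCGroup

section
variable {G : Type*} [Group G]

lemma commutatorElement_mul_mem_center {z w : G} (hz : z ∈ center G) (hw : w ∈ center G)
    (a b : G) : ⁅a * z, b * w⁆ = ⁅a, b⁆ := by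
  have hzb : ⁅z, b⁆ = 1 :=
    commutatorElement_eq_one_iff_commute.mpr (mem_center_iff.mp hz b).symm
  have hw : ⁅a * z, w⁆ = 1 :=
    commutatorElement_eq_one_iff_commute.mpr (mem_center_iff.mp hw _)
  rw [commutatorElement_mul_right_eq_mul_conj, commutatorElement_mul_left_eq_conj_mul, hzb, hw]
  group

theorem finite_commutatorSet_of_finiteIndex_center [(center G).FiniteIndex] :
    Finite (commutatorSet G) := by
  refine Set.Finite.to_subtype <| (Set.finite_range fun p : (G ⧸ center G) × (G ⧸ center G) =>
      ⁅p.1.out, p.2.out⁆).subset ?_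
  rintro _ ⟨a, b, rfl⟩
  refine ⟨((a : G ⧸ center G), (b : G ⧸ center G)), ?_⟩
  obtain ⟨z, hz⟩ := QuotientGroup.mk_out_eq_mul (center G) a
  obtain ⟨w, hw⟩ := QuotientGroup.mk_out_eq_mul (center G) b
  simp only [hz, hw]
  exact commutatorElement_mul_mem_center z.2 w.2 a b

theorem isMulCommutative_map_of_commutator_le_ker {H : Type*} [Group H] (N : Subgroup G)
    {f : G →* H} (hf : ⁅N, N⁆ ≤ f.ker) : IsMulCommutative (N.map f) := by
  rw [← le_centralizer_iff_isMulCommutative, ← commutator_eq_bot_iff_le_centralizer,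
    ← map_commutator, Subgroup.map_eq_bot_iff]
  exact hf

theorem finite_commutator_quotient_subgroupOf (K : Subgroup G) [K.Normal]
    [Finite (commutator (G ⧸ K))] : Finite (commutator G ⧸ K.subgroupOf (commutator G)) := by
  let φ := (QuotientGroup.mk' K).comp (commutator G).subtype
  have hker : φ.ker = K.subgroupOf (commutator G) := by
    rw [← MonoidHom.comap_ker, QuotientGroup.ker_mk']
    rfl
  have hrange : φ.range = commutator (G ⧸ K) := by
    rw [MonoidHom.range_comp, range_subtype, _root_.commutator_def, _root_.commutator_def,
      map_commutator, map_top_of_surjective _ (QuotientGroup.mk'_surjective K)]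
  have : Finite φ.range := by rw [hrange]; infer_instance
  rw [← hker]
  exact .of_equiv _ (QuotientGroup.quotientKerEquivRange φ).symm.toEquiv

end

theorem stmt_5_general {G : Type*} [Group G]
    (hFC : ∀ x : G, (Set.range fun h : G => h * x * h⁻¹).Finite)
    (N : Subgroup G) [N.Normal] [N.FiniteIndex] :
    Finite
      (↥(commutator G) ⧸ ((Subgroup.map N.subtype (commutator ↥N)).subgroupOf (commutator G))) := by
  rw [map_subtype_commutator]
  let π := QuotientGroup.mk' ⁅N, N⁆
  have hπ : Function.Surjective π := QuotientGroup.mk'_surjective _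
  have : (N.map π).FiniteIndex :=
    ⟨ne_zero_of_dvd_ne_zero FiniteIndex.index_ne_zero (index_map_dvd N hπ)⟩
  have : IsMulCommutative (N.map π) :=
    isMulCommutative_map_of_commutator_le_ker N (QuotientGroup.ker_mk' _).ge
  have : (center (G ⧸ ⁅N, N⁆)).FiniteIndex :=
    (IsFCGroup.of_surjective hFC hπ).finiteIndex_center (N.map π)
  have := finite_commutatorSet_of_finiteIndex_center (G := G ⧸ ⁅N, N⁆)
  exact finite_commutator_quotient_subgroupOf ⁅N, N⁆

theorem stmt_5 {G : Type*} [Group G]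
    (hFC : ∀ x : G, (Set.range fun h : G => h * x * h⁻¹).Finite)
    (N : Subgroup G) [N.Normal] [N.FiniteIndex]
    [((Subgroup.map N.subtype (commutator ↥N)).subgroupOf (commutator G)).Normal] :
    Finite
      (↥(commutator G) ⧸ ((Subgroup.map N.subtype (commutator ↥N)).subgroupOf (commutator G))) :=
  stmt_5_general hFC N
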